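/- Let α : I → ℝ³ be a unit-speed curve with positive curvature κ and torsion τ. If κ and τ satisfy ((1/κ)' · (1/τ))' + τ/κ = 0 with τ nonvanishing, then there exist constants A, B ∈ ℝ such that 1/κ(s) = A·cos(∫₀ˢ τ(u) du) + B·sin(∫₀ˢ τ(u) du) for all s ∈ I. -/

import Mathlib

open scoped RealInnerProductSpace ContDiff

noncomputable def det3 (a b c : EuclideanSpace ℝ (Fin 3)) : ℝ :=
  Matrix.det (Matrix.of ![(a : Fin 3 → ℝ), b, c])

lemma det3_contDiff (f g h : ℝ → EuclideanSpace ℝ (Fin 3)) (hf : ContDiff ℝ ∞ f)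
    (hg : ContDiff ℝ ∞ g) (hh : ContDiff ℝ ∞ h) :
    ContDiff ℝ ∞ (fun s => det3 (f s) (g s) (h s)) := by
  have hcoord : ∀ (u : ℝ → EuclideanSpace ℝ (Fin 3)), ContDiff ℝ ∞ u →
      ∀ i : Fin 3, ContDiff ℝ ∞ (fun s => u s i) := by
    intro u hu i
    exact (EuclideanSpace.proj i : EuclideanSpace ℝ (Fin 3) →L[ℝ] ℝ).contDiff.comp hu
  simp only [det3, Matrix.det_fin_three, Matrix.of_apply, Matrix.cons_val', Matrix.cons_val_zero,
    Matrix.empty_val', Matrix.cons_val_fin_one, Matrix.cons_val_one, Matrix.head_cons,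
    Matrix.head_fin_const, Matrix.cons_val_two, Matrix.tail_cons, Matrix.head_val']
  exact (((((((hcoord f hf 0).mul (hcoord g hg 1)).mul (hcoord h hh 2)).sub
    (((hcoord f hf 0).mul (hcoord g hg 2)).mul (hcoord h hh 1))).sub
    (((hcoord f hf 1).mul (hcoord g hg 0)).mul (hcoord h hh 2))).add
    (((hcoord f hf 1).mul (hcoord g hg 2)).mul (hcoord h hh 0))).add
    (((hcoord f hf 2).mul (hcoord g hg 0)).mul (hcoord h hh 1))).sub
    (((hcoord f hf 2).mul (hcoord g hg 1)).mul (hcoord h hh 0))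

theorem stmt_5 (a b : ℝ) (ha : a < 0) (hb : 0 < b)
    (α : ℝ → EuclideanSpace ℝ (Fin 3)) (κ τ : ℝ → ℝ)
    (hα : ContDiff ℝ (⊤ : ℕ∞) α)
    (hunit : ∀ s ∈ Set.Ioo a b, ‖deriv α s‖ = 1)
    (hκ : ∀ s, κ s = ‖deriv (deriv α) s‖)
    (hκpos : ∀ s ∈ Set.Ioo a b, 0 < κ s)
    (hτ : ∀ s, τ s = det3 (deriv α s) (deriv (deriv α) s) (deriv (deriv (deriv α)) s) / κ s ^ 2)
    (hτ0 : ∀ s ∈ Set.Ioo a b, τ s ≠ 0)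
    (hode : ∀ s ∈ Set.Ioo a b,
      deriv (fun t => deriv (fun u => 1 / κ u) t * (1 / τ t)) s + τ s / κ s = 0) :
    ∃ A B : ℝ, ∀ s ∈ Set.Ioo a b,
      1 / κ s = A * Real.cos (∫ u in (0:ℝ)..s, τ u)
        + B * Real.sin (∫ u in (0:ℝ)..s, τ u) := by
  have hIopen : IsOpen (Set.Ioo a b) := isOpen_Ioo
  have h0I : (0:ℝ) ∈ Set.Ioo a b := ⟨ha, hb⟩
  -- derivatives of α are smooth
  have hα0 : ContDiff ℝ ∞ α := hα.of_le (by simp)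
  have hα1 : ContDiff ℝ ∞ (deriv α) := (contDiff_infty_iff_deriv.mp hα0).2
  have hα2 : ContDiff ℝ ∞ (deriv (deriv α)) := (contDiff_infty_iff_deriv.mp hα1).2
  have hα3 : ContDiff ℝ ∞ (deriv (deriv (deriv α))) := (contDiff_infty_iff_deriv.mp hα2).2
  -- κ is smooth on the interval
  have hκC : ContDiffOn ℝ ∞ κ (Set.Ioo a b) := by
    intro s hs
    have hne : deriv (deriv α) s ≠ 0 := by
      intro h
      have h2 := hκpos s hs
      rw [hκ s, h, norm_zero] at h2
      exact lt_irrefl _ h2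
    have : ContDiffAt ℝ ∞ (fun t => ‖deriv (deriv α) t‖) s := hα2.contDiffAt.norm ℝ hne
    exact (this.congr_of_eventuallyEq (by filter_upwards with t using (hκ t))).contDiffWithinAt
  have hκne : ∀ s ∈ Set.Ioo a b, κ s ≠ 0 := fun s hs => (hκpos s hs).ne'
  -- τ is smooth on the interval
  have hτC : ContDiffOn ℝ ∞ τ (Set.Ioo a b) := by
    have hnum : ContDiff ℝ ∞ (fun s =>
        det3 (deriv α s) (deriv (deriv α) s) (deriv (deriv (deriv α)) s)) :=
      det3_contDiff _ _ _ hα1 hα2 hα3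
    have : ContDiffOn ℝ ∞ (fun s =>
        det3 (deriv α s) (deriv (deriv α) s) (deriv (deriv (deriv α)) s) / κ s ^ 2)
        (Set.Ioo a b) :=
      hnum.contDiffOn.div (hκC.pow 2) (fun s hs => pow_ne_zero 2 (hκne s hs))
    exact this.congr (fun s _ => hτ s)
  -- the function f = 1/κ and v = f' / τ
  set f : ℝ → ℝ := fun u => 1 / κ u with hf
  have hfC : ContDiffOn ℝ ∞ f (Set.Ioo a b) := contDiffOn_const.div hκC hκne
  have hf'C : ContDiffOn ℝ ∞ (deriv f) (Set.Ioo a b) :=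
    ((contDiffOn_infty_iff_deriv_of_isOpen hIopen).mp hfC).2
  set v : ℝ → ℝ := fun t => deriv f t * (1 / τ t) with hv
  have hvC : ContDiffOn ℝ ∞ v (Set.Ioo a b) :=
    hf'C.mul (contDiffOn_const.div hτC hτ0)
  -- θ = ∫₀ˢ τ
  set θ : ℝ → ℝ := fun r => ∫ u in (0:ℝ)..r, τ u with hθdef
  have hθ : ∀ s ∈ Set.Ioo a b, HasDerivAt θ (τ s) s := by
    intro s hs
    have hsub : Set.uIcc (0:ℝ) s ⊆ Set.Ioo a b := Set.ordConnected_Ioo.uIcc_subset h0I hs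
    have hint : IntervalIntegrable τ MeasureTheory.volume 0 s :=
      (hτC.continuousOn.mono hsub).intervalIntegrable
    have hmeas : StronglyMeasurableAtFilter τ (nhds s) MeasureTheory.volume :=
      ContinuousOn.stronglyMeasurableAtFilter hIopen hτC.continuousOn s hs
    have hcont : ContinuousAt τ s := hτC.continuousOn.continuousAt (hIopen.mem_nhds hs)
    exact intervalIntegral.integral_hasDerivAt_right hint hmeas hcont
  -- derivative identities
  have hfd : ∀ s ∈ Set.Ioo a b, HasDerivAt f (τ s * v s) s := by
    intro s hs
    have hd : DifferentiableAt ℝ f s :=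
      (hfC.contDiffAt (hIopen.mem_nhds hs)).differentiableAt (by norm_num)
    have : τ s * v s = deriv f s := by
      simp only [hv]
      field_simp
      exact mul_div_cancel_left₀ _ (hτ0 s hs)
    rw [this]
    exact hd.hasDerivAt
  have hvd : ∀ s ∈ Set.Ioo a b, HasDerivAt v (-(τ s * f s)) s := by
    intro s hs
    have hd : DifferentiableAt ℝ v s :=
      (hvC.contDiffAt (hIopen.mem_nhds hs)).differentiableAt (by norm_num)
    have h2 := hode s hs
    have : -(τ s * f s) = deriv v s := by
      have : deriv v s = -(τ s / κ s) := by linarith [hode s hs]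
      rw [this, hf]
      ring
    rw [this]
    exact hd.hasDerivAt
  -- P and Q are constant
  set P : ℝ → ℝ := fun r => f r * Real.cos (θ r) - v r * Real.sin (θ r) with hP
  set Q : ℝ → ℝ := fun r => f r * Real.sin (θ r) + v r * Real.cos (θ r) with hQ
  have hPd : ∀ s ∈ Set.Ioo a b, HasDerivAt P 0 s := by
    intro s hs
    have h1 : HasDerivAt (fun r => Real.cos (θ r)) (-Real.sin (θ s) * τ s) s :=
      (hθ s hs).cos
    have h2 : HasDerivAt (fun r => Real.sin (θ r)) (Real.cos (θ s) * τ s) s :=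
      (hθ s hs).sin
    have h3 := (((hfd s hs).mul h1).sub ((hvd s hs).mul h2))
    exact h3.congr_deriv (by ring)
  have hQd : ∀ s ∈ Set.Ioo a b, HasDerivAt Q 0 s := by
    intro s hs
    have h1 : HasDerivAt (fun r => Real.cos (θ r)) (-Real.sin (θ s) * τ s) s :=
      (hθ s hs).cos
    have h2 : HasDerivAt (fun r => Real.sin (θ r)) (Real.cos (θ s) * τ s) s :=
      (hθ s hs).sin
    have h3 := (((hfd s hs).mul h2).add ((hvd s hs).mul h1))
    exact h3.congr_deriv (by ring)
  have hconst : ∀ (g : ℝ → ℝ), (∀ s ∈ Set.Ioo a b, HasDerivAt g 0 s) →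
      ∀ s ∈ Set.Ioo a b, g s = g 0 := by
    intro g hg s hs
    refine (convex_Ioo a b).is_const_of_fderivWithin_eq_zero
      (fun t ht => ((hg t ht).differentiableAt).differentiableWithinAt) ?_ hs h0I
    intro t ht
    have := ((hg t ht).hasFDerivAt.hasFDerivWithinAt).fderivWithin
      (hIopen.uniqueDiffWithinAt ht)
    rw [this]
    ext y
    simp
  refine ⟨P 0, Q 0, fun s hs => ?_⟩
  have hPs := hconst P hPd s hs
  have hQs := hconst Q hQd s hs
  have hfs : (1:ℝ) / κ s = f s := rfl
  have hθs : (∫ u in (0:ℝ)..s, τ u) = θ s := rfl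
  rw [hfs, hθs, ← hPs, ← hQs]
  simp only [hP, hQ]
  have htrig := Real.sin_sq_add_cos_sq (θ s)
  linear_combination (-(f s)) * htrig
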